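/- For every integer n ≥ 0 and every integer i with 1 ≤ i ≤ n+1, the Boros-Moll coefficients satisfy d_{i−1}(n) = ((n+1)/(n+i)) · d_i(n+1) − ((4n + 2i + 3)/(2(n+i))) · d_i(n), where d_j(m) is taken to be 0 whenever j < 0 or j > m. -/

import Mathlib

open Polynomial

/-- The Boros-Moll polynomial `P_n(x)`. -/
noncomputable def borosMoll (n : ℕ) : Polynomial ℝ :=
  ((2 : ℝ) ^ (2 * n))⁻¹ • ∑ j ∈ Finset.range (n + 1),
    Polynomial.C ((2 : ℝ) ^ j * (Nat.choose (2 * n - 2 * j) (n - j) : ℝ) *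
      (Nat.choose (n + j) j : ℝ)) * (Polynomial.X + 1) ^ j

/-- The coefficients `d_i(n)`, with the convention `d_i(n) = 0` for `i < 0` or `i > n`. -/
noncomputable def bmCoeff (i : ℤ) (n : ℕ) : ℝ :=
  if 0 ≤ i then (borosMoll n).coeff i.toNat else 0

/-- The polynomial `Q_n(x) = ∑ d_i(n)/i! x^i`. -/
noncomputable def Q (n : ℕ) : Polynomial ℝ :=
  ∑ i ∈ Finset.range (n + 1),
    Polynomial.C ((borosMoll n).coeff i / (Nat.factorial i : ℝ)) * Polynomial.X ^ i

/-- The polynomial `R_n(x) = ∑ d_i(n)/(i+2)! x^i`. -/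
noncomputable def R (n : ℕ) : Polynomial ℝ :=
  ∑ i ∈ Finset.range (n + 1),
    Polynomial.C ((borosMoll n).coeff i / (Nat.factorial (i + 2) : ℝ)) * Polynomial.X ^ i

/-- A real polynomial has only real zeros: every complex root is real. -/
def RealRooted (p : Polynomial ℝ) : Prop :=
  ∀ z : ℂ, Polynomial.aeval z p = 0 → z.im = 0

/-- `g` strictly interlaces `f`: `deg f = deg g + 1`, the zeros
`r_1 ≥ ⋯ ≥ r_{m+1}` of `f` and `s_1 ≥ ⋯ ≥ s_m` of `g` satisfy
`r_{i+1} ≤ s_i ≤ r_i`, and `f, g` have no common zeros. -/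
def StrictlyInterlaces (g f : Polynomial ℝ) : Prop :=
  f.natDegree = g.natDegree + 1 ∧
  ∃ (s : Fin g.natDegree → ℝ) (r : Fin (g.natDegree + 1) → ℝ),
    Antitone s ∧ Antitone r ∧
    g.roots = Multiset.map s Finset.univ.val ∧
    f.roots = Multiset.map r Finset.univ.val ∧
    (∀ i : Fin g.natDegree, r i.succ ≤ s i ∧ s i ≤ r i.castSucc) ∧
    ∀ x : ℝ, ¬ (g.IsRoot x ∧ f.IsRoot x)

/-!
With `x = y - 1`, the polynomial `4^n P_n(y - 1) = W_n(y)` has coefficients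
`a_j(n) = 2^j C(2n-2j, n-j) C(n+j, j)`. The ratios of this hypergeometric term in `j` and `n`
give the three-term recurrence `(n+1) a_{j+1}(n+1) = 4(n+j+1) a_j(n) + 2(2n-2j-1) a_{j+1}(n)`,
i.e. `(n+1) W_{n+1} = (4(n+1)y + 2(2n+1)) W_n + 4y(y-1) W_n'`. Shifting back gives
`2(n+1) P_{n+1} = (2(n+1)x + 4n+3) P_n + 2x(x+1) P_n'`, and the coefficient of `x^i` of this
identity is the recurrence multiplied by `2(n+i)`.
-/

-- The guard matters: for `j > n` the truncated subtractions would give `C(0, 0) = 1`.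
noncomputable def bmWeight (n j : ℕ) : ℝ :=
  if j ≤ n then 2 ^ j * (Nat.choose (2 * n - 2 * j) (n - j) : ℝ) * (Nat.choose (n + j) j : ℝ)
  else 0

lemma bmWeight_of_le {n j : ℕ} (h : j ≤ n) :
    bmWeight n j =
      2 ^ j * (Nat.choose (2 * n - 2 * j) (n - j) : ℝ) * (Nat.choose (n + j) j : ℝ) :=
  if_pos h

lemma bmWeight_of_lt {n j : ℕ} (h : n < j) : bmWeight n j = 0 := if_neg h.not_ge

lemma succ_mul_bmWeight_succ_zero (n : ℕ) :
    (n + 1) * bmWeight (n + 1) 0 = 2 * (2 * n + 1) * bmWeight n 0 := by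
  simp only [bmWeight, zero_le, if_true, pow_zero, one_mul, mul_zero, Nat.sub_zero,
    Nat.add_zero, Nat.choose_zero_right, Nat.cast_one, mul_one,
    ← Nat.centralBinom_eq_two_mul_choose]
  exact_mod_cast Nat.succ_mul_centralBinom_succ n

lemma mul_bmWeight_succ_succ (n j : ℕ) :
    (j + 1) * (n + 1) * bmWeight (n + 1) (j + 1) =
      2 * (n + j + 1) * (n + j + 2) * bmWeight n j := by
  rcases le_or_gt j n with hj | hj
  · have hup : ((n + j + 2 : ℕ) : ℝ) * (n + j + 1).choose j =
        (n + j + 2).choose (j + 1) * (j + 1) := by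
      exact_mod_cast Nat.add_one_mul_choose_eq (n + j + 1) j
    have hright : ((n + j).choose j : ℝ) * (n + j + 1) = (n + j + 1).choose j * (n + 1) := by
      have := Nat.choose_mul_succ_eq (n + j) j
      rw [show n + j + 1 - j = n + 1 by omega] at this
      exact_mod_cast this
    rw [bmWeight_of_le hj, bmWeight_of_le (by omega), Nat.add_sub_add_right,
      show 2 * (n + 1) - 2 * (j + 1) = 2 * n - 2 * j by omega,
      show n + 1 + (j + 1) = n + j + 2 by omega]
    push_cast at hup ⊢
    linear_combination (2 : ℝ) ^ j * ((2 * n - 2 * j).choose (n - j) : ℝ) *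
      (-2 * (n + 1) * hup - 2 * (n + j + 2) * hright)
  · rw [bmWeight_of_lt hj, bmWeight_of_lt (by omega : n + 1 < j + 1)]
    ring

lemma mul_bmWeight_succ (n j : ℕ) :
    (j + 1) * (2 * n - 2 * j - 1) * bmWeight n (j + 1) = (n - j) * (n + j + 1) * bmWeight n j := by
  rcases lt_trichotomy j n with hj | rfl | hj
  · obtain ⟨m, rfl⟩ : ∃ m, n = j + 1 + m := ⟨n - j - 1, by omega⟩
    have hcentral : ((m + 1 : ℕ) : ℝ) * (2 * m + 2).choose (m + 1) =
        2 * (2 * m + 1) * (2 * m).choose m := by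
      exact_mod_cast Nat.succ_mul_centralBinom_succ m
    have hup : ((j + 1 + m + j + 1 : ℕ) : ℝ) * (j + 1 + m + j).choose j
        = (j + 1 + m + j + 1).choose (j + 1) * (j + 1) := by
      exact_mod_cast Nat.add_one_mul_choose_eq (j + 1 + m + j) j
    rw [bmWeight_of_le (by omega), bmWeight_of_le (by omega),
      show 2 * (j + 1 + m) - 2 * (j + 1) = 2 * m by omega, show j + 1 + m - (j + 1) = m by omega,
      show 2 * (j + 1 + m) - 2 * j = 2 * m + 2 by omega, show j + 1 + m - j = m + 1 by omega,
      show j + 1 + m + (j + 1) = j + 1 + m + j + 1 by omega]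
    push_cast at hcentral hup ⊢
    linear_combination -(2 : ℝ) ^ (j + 1) * (2 * m + 1) * ((2 * m).choose m : ℝ) * hup
      - (2 : ℝ) ^ j * (2 * j + m + 2) * ((j + 1 + m + j).choose j : ℝ) * hcentral
  · simp [bmWeight_of_lt (Nat.lt_succ_self j)]
  · rw [bmWeight_of_lt hj, bmWeight_of_lt (by omega : n < j + 1)]
    ring

lemma succ_mul_bmWeight_succ_succ (n j : ℕ) :
    (n + 1) * bmWeight (n + 1) (j + 1) =
      4 * (n + j + 1) * bmWeight n j + 2 * (2 * n - 2 * j - 1) * bmWeight n (j + 1) := by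
  refine mul_left_cancel₀ (Nat.cast_add_one_ne_zero j) ?_
  linear_combination mul_bmWeight_succ_succ n j - 2 * mul_bmWeight_succ n j

noncomputable def bmWeightPoly (n : ℕ) : ℝ[X] :=
  ∑ j ∈ Finset.range (n + 1), C (bmWeight n j) * X ^ j

lemma coeff_bmWeightPoly (n k : ℕ) : (bmWeightPoly n).coeff k = bmWeight n k := by
  simp only [bmWeightPoly, finsetSum_coeff, coeff_C_mul_X_pow, Finset.sum_ite_eq,
    Finset.mem_range]
  split_ifs with hk
  · rfl
  · exact (bmWeight_of_lt (by omega)).symm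

lemma coeff_X_mul_derivative {R : Type*} [Semiring R] (p : R[X]) (k : ℕ) :
    (X * derivative p).coeff k = k * p.coeff k := by
  rcases k with _ | k
  · simp
  · rw [coeff_X_mul, coeff_derivative, ← Nat.cast_succ, Nat.cast_comm]

lemma succ_mul_bmWeightPoly_succ (n : ℕ) :
    ((n : ℝ[X]) + 1) * bmWeightPoly (n + 1) =
      (4 * ((n : ℝ[X]) + 1) * X + 2 * (2 * (n : ℝ[X]) + 1)) * bmWeightPoly n +
        4 * X * (X - 1) * derivative (bmWeightPoly n) := by
  ext (_ | k)
  · simp [coeff_bmWeightPoly, mul_assoc]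
    linear_combination succ_mul_bmWeight_succ_zero n
  · simp [coeff_bmWeightPoly, coeff_X_mul_derivative, coeff_derivative, mul_add, add_mul,
      mul_sub, sub_mul, mul_assoc]
    linear_combination succ_mul_bmWeight_succ_succ n k

lemma four_pow_mul_borosMoll (n : ℕ) :
    (4 : ℝ[X]) ^ n * borosMoll n = (bmWeightPoly n).comp (X + 1) := by
  have hunit : (4 : ℝ[X]) ^ n * C ((2 : ℝ) ^ (2 * n))⁻¹ = 1 := by
    rw [← C_ofNat, ← C_pow, ← C_mul, ← C_1, pow_mul]
    norm_num
  rw [borosMoll, bmWeightPoly, sum_comp, smul_eq_C_mul, ← mul_assoc, hunit, one_mul]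
  refine Finset.sum_congr rfl fun j hj => ?_
  rw [mul_comp, C_comp, X_pow_comp, bmWeight_of_le (Finset.mem_range_succ_iff.mp hj)]

theorem succ_mul_borosMoll_succ (n : ℕ) :
    2 * ((n : ℝ[X]) + 1) * borosMoll (n + 1) =
      (2 * ((n : ℝ[X]) + 1) * X + 4 * (n : ℝ[X]) + 3) * borosMoll n +
        2 * X * (X + 1) * derivative (borosMoll n) := by
  have hP := four_pow_mul_borosMoll n
  have hP' : (4 : ℝ[X]) ^ n * derivative (borosMoll n) =
      (derivative (bmWeightPoly n)).comp (X + 1) := by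
    simpa [derivative_comp, derivative_pow] using congrArg derivative hP
  have hW := congrArg (·.comp (X + 1)) (succ_mul_bmWeightPoly_succ n)
  simp only [mul_comp, add_comp, sub_comp, natCast_comp, ofNat_comp, Nat.cast_ofNat, X_comp,
    one_comp] at hW
  rw [← four_pow_mul_borosMoll (n + 1), ← hP, ← hP'] at hW
  refine mul_left_cancel₀ (by norm_num : (2 : ℝ[X]) * 4 ^ n ≠ 0) ?_
  linear_combination hW

lemma succ_mul_coeff_borosMoll_succ (n k : ℕ) :
    2 * (n + 1) * (borosMoll (n + 1)).coeff (k + 1) =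
      2 * (n + k + 1) * (borosMoll n).coeff k +
        (4 * n + 2 * k + 5) * (borosMoll n).coeff (k + 1) := by
  have h := congrArg (coeff · (k + 1)) (succ_mul_borosMoll_succ n)
  simp [mul_add, add_mul, mul_assoc, coeff_X_mul_derivative, coeff_derivative] at h
  linear_combination h

lemma bmCoeff_natCast (k n : ℕ) : bmCoeff k n = (borosMoll n).coeff k := by
  simp [bmCoeff]

theorem bmCoeff_backward_recurrence_general (n : ℕ) (i : ℤ)
    (hi0 : 1 ≤ i) :
    bmCoeff (i - 1) n =
      ((n : ℝ) + 1) / ((n : ℝ) + (i : ℝ)) * bmCoeff i (n + 1) -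
        (4 * (n : ℝ) + 2 * (i : ℝ) + 3) / (2 * ((n : ℝ) + (i : ℝ))) * bmCoeff i n := by
  obtain ⟨k, rfl⟩ : ∃ k : ℕ, i = (k + 1 : ℕ) := ⟨(i - 1).toNat, by omega⟩
  rw [show ((k + 1 : ℕ) : ℤ) - 1 = k by omega, bmCoeff_natCast, bmCoeff_natCast,
    bmCoeff_natCast]
  have hpos : (n : ℝ) + (k + 1 : ℕ) ≠ 0 := by positivity
  field_simp
  push_cast
  linear_combination -succ_mul_coeff_borosMoll_succ n k

/-- For every `n ≥ 0` and every integer `1 ≤ i ≤ n+1`: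
`d_{i−1}(n) = ((n+1)/(n+i))·d_i(n+1) − ((4n+2i+3)/(2(n+i)))·d_i(n)`. -/
theorem bmCoeff_backward_recurrence (n : ℕ) (i : ℤ)
    (hi0 : 1 ≤ i) (hi1 : i ≤ (n : ℤ) + 1) :
    bmCoeff (i - 1) n =
      ((n : ℝ) + 1) / ((n : ℝ) + (i : ℝ)) * bmCoeff i (n + 1) -
        (4 * (n : ℝ) + 2 * (i : ℝ) + 3) / (2 * ((n : ℝ) + (i : ℝ))) * bmCoeff i n :=
  bmCoeff_backward_recurrence_general n i hi0
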